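/- (Lemma 2, case h, H ∈ ℝ.) For the problem L with h, H ∈ ℝ, the eigenfunction φ(·,λₙ) := U(S(·,λₙ))·C(·,λₙ) − U(C(·,λₙ))·S(·,λₙ) corresponding to the eigenvalue λₙ satisfies, for sufficiently large n and uniformly for x ∈ [0,1], φ(x,λₙ) = cos(kₙx) + ((Q(x) − h)/kₙ)·sin(kₙx) + (γ₀/kₙ)·sin(kₙ(x − ξ₀)) + O(1/kₙ²), where kₙ = √λₙ. -/

import Mathlib

/-
Variation of constants against `cos (r t)`, `sin (r t) / r` turns `-y'' + q y = r² y` into an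
integral equation whose kernel carries a factor `1 / r`; a maximum argument then bounds every
solution uniformly once `|r| > 4 sup |q|`, so that `C = cos (r x) + O(1/r)` and
`S = sin (r x) / r + O(1/r²)`. Feeding `C = cos + O(1/r)` back into the integral equation, the
term `q cos² (r t)` splits into `q / 2`, which produces `Q(x) sin (r x) / r`, and
`q cos (2 r t) / 2`, whose integral is `O(1/r)` after one integration by parts because `q` is
`C¹`. In `φ = (1 - γ₀ S(ξ₀)) C - (h - γ₀ C(ξ₀)) S` the two `γ₀` terms combine into
`γ₀ sin (r (x - ξ₀)) / r`. Finally `kₙ` is real for large `n`, since `λₙ = kₙ²` is real and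
`Re kₙ ~ nπ`, so the estimate for real `r` applies to `r = kₙ`.
-/

open Set Filter Asymptotics

/-- `y`, with derivative `y'`, solves `-y'' + q y = lam y` on `[0,1]`. -/
def IsSLSolution (q : ℝ → ℝ) (lam : ℂ) (y y' : ℝ → ℂ) : Prop :=
  (∀ x ∈ Set.Icc (0:ℝ) 1, HasDerivWithinAt y (y' x) (Set.Icc 0 1) x) ∧
  (∀ x ∈ Set.Icc (0:ℝ) 1, HasDerivWithinAt y' (((q x : ℂ) - lam) * y x) (Set.Icc 0 1) x)

/-- The boundary form `U(y) = y'(0) + h y(0) - γ₀ y(ξ₀)`. -/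
def Uform (h γ0 ξ0 : ℝ) (y y' : ℝ → ℂ) : ℂ := y' 0 + (h:ℂ) * y 0 - (γ0:ℂ) * y ξ0

/-- The boundary form `V(y) = y'(1) + H y(1) - γ₁ y(ξ₁)`. -/
def Vform (H γ1 ξ1 : ℝ) (y y' : ℝ → ℂ) : ℂ := y' 1 + (H:ℂ) * y 1 - (γ1:ℂ) * y ξ1

/-- `lam` enumerates the zeros of `Δ` (the eigenvalues), ordered by modulus. -/
def EnumeratesZeros (Δ : ℂ → ℂ) (lam : ℕ → ℂ) : Prop :=
  Function.Injective lam ∧ (∀ n, Δ (lam n) = 0) ∧ (∀ μ : ℂ, Δ μ = 0 → ∃ n, lam n = μ) ∧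
    Monotone fun n => ‖lam n‖

open Complex (cos sin)

section Trig

lemma norm_cos_ofReal_mul_le_one (r t : ℝ) : ‖cos (r * t)‖ ≤ 1 := by
  rw [← Complex.ofReal_mul, ← Complex.ofReal_cos, Complex.norm_real, Real.norm_eq_abs]
  exact Real.abs_cos_le_one _

lemma norm_sin_ofReal_mul_le_one (r t : ℝ) : ‖sin (r * t)‖ ≤ 1 := by
  rw [← Complex.ofReal_mul, ← Complex.ofReal_sin, Complex.norm_real, Real.norm_eq_abs]
  exact Real.abs_sin_le_one _

lemma hasDerivAt_cos_ofReal_mul (r t : ℝ) :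
    HasDerivAt (fun s : ℝ => cos (r * s)) (-r * sin (r * t)) t := by
  simpa [mul_comm] using ((hasDerivAt_id (t : ℂ)).const_mul (r : ℂ)).ccos.comp_ofReal

lemma hasDerivAt_sin_ofReal_mul (r t : ℝ) :
    HasDerivAt (fun s : ℝ => sin (r * s)) (r * cos (r * t)) t := by
  simpa [mul_comm] using ((hasDerivAt_id (t : ℂ)).const_mul (r : ℂ)).csin.comp_ofReal

end Trig

section UnitInterval

variable {E : Type*} [NormedAddCommGroup E] {f f' : ℝ → E} {q : ℝ → ℝ} {y : ℝ → ℂ} {x Mq : ℝ}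

lemma intervalIntegrable_zero_of_continuousOn (hf : ContinuousOn f (Icc 0 1))
    (hx : x ∈ Icc (0 : ℝ) 1) : IntervalIntegrable f MeasureTheory.volume 0 x :=
  (hf.mono (Icc_subset_Icc le_rfl hx.2)).intervalIntegrable_of_Icc hx.1

variable [NormedSpace ℝ E]

lemma norm_integral_zero_le_of_norm_le {C : ℝ} (hf : ∀ t ∈ Icc (0 : ℝ) 1, ‖f t‖ ≤ C)
    (hx : x ∈ Icc (0 : ℝ) 1) : ‖∫ t in (0 : ℝ)..x, f t‖ ≤ C := by
  have hC : 0 ≤ C := (norm_nonneg _).trans (hf 0 (left_mem_Icc.2 zero_le_one))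
  calc ‖∫ t in (0 : ℝ)..x, f t‖ ≤ C * |x - 0| :=
        intervalIntegral.norm_integral_le_of_norm_le_const fun t ht => by
          rw [uIoc_of_le hx.1] at ht
          exact hf t ⟨ht.1.le, ht.2.trans hx.2⟩
    _ ≤ C * 1 := by
        rw [sub_zero, abs_of_nonneg hx.1]; exact mul_le_mul_of_nonneg_left hx.2 hC
    _ = C := mul_one C

variable [CompleteSpace E]

lemma integral_zero_eq_sub_of_hasDerivWithinAt
    (hf : ∀ t ∈ Icc (0 : ℝ) 1, HasDerivWithinAt f (f' t) (Icc 0 1) t)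
    (hf' : ContinuousOn f' (Icc 0 1)) (hx : x ∈ Icc (0 : ℝ) 1) :
    ∫ t in (0 : ℝ)..x, f' t = f x - f 0 :=
  intervalIntegral.integral_eq_sub_of_hasDerivAt_of_le hx.1
    (fun t ht => (hf t ⟨ht.1, ht.2.trans hx.2⟩).continuousWithinAt.mono
      (Icc_subset_Icc le_rfl hx.2))
    (fun t ht => (hf t ⟨ht.1.le, ht.2.le.trans hx.2⟩).hasDerivAt
      (Icc_mem_nhds ht.1 (ht.2.trans_le hx.2)))
    (intervalIntegrable_zero_of_continuousOn hf' hx)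

lemma abs_pos_of_four_mul_lt {r : ℝ} (hMq : ∀ t ∈ Icc (0 : ℝ) 1, |q t| ≤ Mq) (hr : 4 * Mq < |r|) :
    0 < |r| := by
  linarith [(abs_nonneg (q 0)).trans (hMq 0 (left_mem_Icc.2 zero_le_one))]

lemma norm_integral_ofReal_mul_mul_le (hMq : ∀ t ∈ Icc (0 : ℝ) 1, |q t| ≤ Mq) {m : ℝ}
    (hm : ∀ t ∈ Icc (0 : ℝ) 1, ‖y t‖ ≤ m) {g : ℝ → ℂ} (hg : ∀ t, ‖g t‖ ≤ 1)
    (hx : x ∈ Icc (0 : ℝ) 1) : ‖∫ t in (0 : ℝ)..x, q t * y t * g t‖ ≤ Mq * m := by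
  refine norm_integral_zero_le_of_norm_le (fun t ht => ?_) hx
  have hMq0 : 0 ≤ Mq := (abs_nonneg _).trans (hMq t ht)
  rw [norm_mul, norm_mul, Complex.norm_real, Real.norm_eq_abs]
  simpa using mul_le_mul (mul_le_mul (hMq t ht) (hm t ht) (norm_nonneg _) hMq0) (hg t)
    (norm_nonneg _) (mul_nonneg hMq0 ((norm_nonneg _).trans (hm t ht)))

end UnitInterval

section Oscillation

open MeasureTheory

variable {A : Type*} [NormedRing A] [NormedAlgebra ℝ A] [CompleteSpace A] {u u' v v' : ℝ → A}
  {a b K K' B : ℝ}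

lemma norm_integral_mul_deriv_le (hab : a ≤ b)
    (hu : ∀ t ∈ Icc a b, HasDerivWithinAt u (u' t) (Icc a b) t)
    (hv : ∀ t ∈ Icc a b, HasDerivWithinAt v (v' t) (Icc a b) t)
    (hu' : IntervalIntegrable u' volume a b) (hv' : IntervalIntegrable v' volume a b)
    (hK : ∀ t ∈ Icc a b, ‖u t‖ ≤ K) (hK' : ∀ t ∈ Icc a b, ‖u' t‖ ≤ K')
    (hB : ∀ t ∈ Icc a b, ‖v t‖ ≤ B) :
    ‖∫ t in a..b, u t * v' t‖ ≤ (2 * K + K' * (b - a)) * B := by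
  rw [← uIcc_of_le hab] at hu hv
  rw [intervalIntegral.integral_mul_deriv_eq_deriv_mul_of_hasDerivWithinAt hu hv hu' hv']
  have ha := left_mem_Icc.2 hab
  have hb := right_mem_Icc.2 hab
  have hint : ‖∫ t in a..b, u' t * v t‖ ≤ K' * B * |b - a| :=
    intervalIntegral.norm_integral_le_of_norm_le_const fun t ht => by
      rw [uIoc_of_le hab] at ht
      have ht' : t ∈ Icc a b := Ioc_subset_Icc_self ht
      exact (norm_mul_le _ _).trans
        (mul_le_mul (hK' t ht') (hB t ht') (norm_nonneg _) ((norm_nonneg _).trans (hK' t ht')))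
  have hK0 : 0 ≤ K := (norm_nonneg _).trans (hK a ha)
  have hB0 : 0 ≤ B := (norm_nonneg _).trans (hB a ha)
  calc ‖u b * v b - u a * v a - ∫ t in a..b, u' t * v t‖
      ≤ ‖u b‖ * ‖v b‖ + ‖u a‖ * ‖v a‖ + K' * B * |b - a| :=
        (norm_sub_le _ _).trans (add_le_add ((norm_sub_le _ _).trans
          (add_le_add (norm_mul_le _ _) (norm_mul_le _ _))) hint)
    _ ≤ K * B + K * B + K' * B * (b - a) := by
        rw [abs_of_nonneg (sub_nonneg.2 hab)]
        gcongr
        exacts [hK b hb, hB b hb, hK a ha, hB a ha]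
    _ = (2 * K + K' * (b - a)) * B := by ring

variable {q : ℝ → ℝ} {r x Mq Mq' : ℝ}

lemma norm_integral_ofReal_mul_deriv_le (hq : ContDiffOn ℝ 1 q (Icc 0 1))
    (hMq : ∀ t ∈ Icc (0 : ℝ) 1, |q t| ≤ Mq)
    (hMq' : ∀ t ∈ Icc (0 : ℝ) 1, |derivWithin q (Icc 0 1) t| ≤ Mq')
    {v v' : ℝ → ℂ} (hv : ∀ t, HasDerivAt v (v' t) t) (hv' : Continuous v') {B : ℝ}
    (hB : ∀ t, ‖v t‖ ≤ B) (hx : x ∈ Icc (0 : ℝ) 1) :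
    ‖∫ t in (0 : ℝ)..x, (q t : ℂ) * v' t‖ ≤ (2 * Mq + Mq') * B := by
  have hsub : Icc 0 x ⊆ Icc (0 : ℝ) 1 := Icc_subset_Icc le_rfl hx.2
  have hq' : ContinuousOn (fun t => ((derivWithin q (Icc 0 1) t : ℝ) : ℂ)) (Icc 0 1) :=
    Complex.continuous_ofReal.comp_continuousOn
      (hq.continuousOn_derivWithin (uniqueDiffOn_Icc zero_lt_one) le_rfl)
  refine (norm_integral_mul_deriv_le hx.1
    (fun t ht => ((hq.differentiableOn one_ne_zero t (hsub ht)).hasDerivWithinAt.mono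
      hsub).ofReal_comp)
    (fun t _ => (hv t).hasDerivWithinAt) (intervalIntegrable_zero_of_continuousOn hq' hx)
    (hv'.intervalIntegrable 0 x) (K := Mq) (K' := Mq') (B := B) (fun t ht => ?_)
    (fun t ht => ?_) (fun t _ => hB t)).trans ?_
  · simpa using hMq t (hsub ht)
  · simpa using hMq' t (hsub ht)
  · have hMq'0 : 0 ≤ Mq' := (abs_nonneg _).trans (hMq' 0 ⟨le_rfl, zero_le_one⟩)
    have hB0 : 0 ≤ B := (norm_nonneg _).trans (hB 0)
    gcongr
    linarith [mul_le_of_le_one_right hMq'0 hx.2]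

lemma norm_integral_ofReal_mul_cos_le (hq : ContDiffOn ℝ 1 q (Icc 0 1))
    (hMq : ∀ t ∈ Icc (0 : ℝ) 1, |q t| ≤ Mq)
    (hMq' : ∀ t ∈ Icc (0 : ℝ) 1, |derivWithin q (Icc 0 1) t| ≤ Mq') (hr : r ≠ 0)
    (hx : x ∈ Icc (0 : ℝ) 1) :
    ‖∫ t in (0 : ℝ)..x, (q t : ℂ) * cos (2 * r * t)‖ ≤ (2 * Mq + Mq') / (2 * |r|) := by
  have hv (t : ℝ) : HasDerivAt (fun s : ℝ => sin (2 * r * s) / (2 * r)) (cos (2 * r * t)) t := by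
    have := (hasDerivAt_sin_ofReal_mul (2 * r) t).div_const (2 * r : ℂ)
    push_cast at this
    exact this.congr_deriv (by field_simp [Complex.ofReal_ne_zero.2 hr])
  have hB (t : ℝ) : ‖sin (2 * r * t) / (2 * r)‖ ≤ 1 / (2 * |r|) := by
    rw [norm_div]
    gcongr
    · exact_mod_cast norm_sin_ofReal_mul_le_one (2 * r) t
    · simp
  simpa [div_eq_mul_inv] using
    norm_integral_ofReal_mul_deriv_le hq hMq hMq' hv (by fun_prop) hB hx

lemma norm_integral_ofReal_mul_sin_le (hq : ContDiffOn ℝ 1 q (Icc 0 1))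
    (hMq : ∀ t ∈ Icc (0 : ℝ) 1, |q t| ≤ Mq)
    (hMq' : ∀ t ∈ Icc (0 : ℝ) 1, |derivWithin q (Icc 0 1) t| ≤ Mq') (hr : r ≠ 0)
    (hx : x ∈ Icc (0 : ℝ) 1) :
    ‖∫ t in (0 : ℝ)..x, (q t : ℂ) * sin (2 * r * t)‖ ≤ (2 * Mq + Mq') / (2 * |r|) := by
  have hv (t : ℝ) : HasDerivAt (fun s : ℝ => -cos (2 * r * s) / (2 * r)) (sin (2 * r * t)) t := by
    have := ((hasDerivAt_cos_ofReal_mul (2 * r) t).neg).div_const (2 * r : ℂ)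
    push_cast at this
    exact this.congr_deriv (by field_simp [Complex.ofReal_ne_zero.2 hr])
  have hB (t : ℝ) : ‖-cos (2 * r * t) / (2 * r)‖ ≤ 1 / (2 * |r|) := by
    rw [norm_div, norm_neg]
    gcongr
    · exact_mod_cast norm_cos_ofReal_mul_le_one (2 * r) t
    · simp
  simpa [div_eq_mul_inv] using
    norm_integral_ofReal_mul_deriv_le hq hMq hMq' hv (by fun_prop) hB hx

end Oscillation

section Splitting

open intervalIntegral

variable {q : ℝ → ℝ} {y : ℝ → ℂ} {r x : ℝ}

lemma integral_mul_cos_sub_half_integral (hq : ContinuousOn q (Icc 0 1))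
    (hy : ContinuousOn y (Icc 0 1)) (hx : x ∈ Icc (0 : ℝ) 1) :
    (∫ t in (0 : ℝ)..x, q t * y t * cos (r * t)) - (((1 / 2) * ∫ t in (0 : ℝ)..x, q t : ℝ) : ℂ) =
      (1 / 2) * (∫ t in (0 : ℝ)..x, (q t : ℂ) * cos (2 * r * t)) +
        ∫ t in (0 : ℝ)..x, q t * (y t - cos (r * t)) * cos (r * t) := by
  have hint {f : ℝ → ℂ} (hf : ContinuousOn f (Icc 0 1)) :=
    intervalIntegrable_zero_of_continuousOn hf hx
  push_cast
  rw [← integral_ofReal, ← integral_const_mul, ← integral_const_mul,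
    ← integral_sub (hint (by fun_prop)) (hint (by fun_prop)),
    ← integral_add (hint (by fun_prop)) (hint (by fun_prop))]
  refine integral_congr fun t _ => ?_
  rw [mul_assoc 2, Complex.cos_two_mul]
  ring

lemma integral_mul_sin_eq (hq : ContinuousOn q (Icc 0 1))
    (hy : ContinuousOn y (Icc 0 1)) (hx : x ∈ Icc (0 : ℝ) 1) :
    ∫ t in (0 : ℝ)..x, q t * y t * sin (r * t) =
      (1 / 2) * (∫ t in (0 : ℝ)..x, (q t : ℂ) * sin (2 * r * t)) +
        ∫ t in (0 : ℝ)..x, q t * (y t - cos (r * t)) * sin (r * t) := by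
  have hint {f : ℝ → ℂ} (hf : ContinuousOn f (Icc 0 1)) :=
    intervalIntegrable_zero_of_continuousOn hf hx
  rw [← integral_const_mul, ← integral_add (hint (by fun_prop)) (hint (by fun_prop))]
  refine integral_congr fun t _ => ?_
  rw [mul_assoc 2, Complex.sin_two_mul]
  ring

end Splitting

namespace IsSLSolution

variable {q : ℝ → ℝ} {lam : ℂ} {y y' : ℝ → ℂ} {r x Mq Mq' : ℝ}

lemma continuousOn (hy : IsSLSolution q lam y y') : ContinuousOn y (Icc 0 1) :=
  fun t ht => (hy.1 t ht).continuousWithinAt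

lemma continuousOn_deriv (hy : IsSLSolution q lam y y') : ContinuousOn y' (Icc 0 1) :=
  fun t ht => (hy.2 t ht).continuousWithinAt

theorem eq_add_integral (hq : ContinuousOn q (Icc 0 1)) (hr : r ≠ 0)
    (hy : IsSLSolution q ((r : ℂ) ^ 2) y y') (hx : x ∈ Icc (0 : ℝ) 1) :
    y x = y 0 * cos (r * x) + y' 0 / r * sin (r * x) +
      (sin (r * x) * (∫ t in (0 : ℝ)..x, q t * y t * cos (r * t)) -
        cos (r * x) * ∫ t in (0 : ℝ)..x, q t * y t * sin (r * t)) / r := by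
  have hr' : (r : ℂ) ≠ 0 := Complex.ofReal_ne_zero.2 hr
  have hyc := hy.continuousOn
  have hy'c := hy.continuousOn_deriv
  -- `c₁ cos (r t) + c₂ sin (r t)` recovers `y t`, and `c₁`, `c₂` only vary through `q y`.
  set c₁ : ℝ → ℂ := fun t => y t * cos (r * t) - y' t * sin (r * t) / r
  set c₂ : ℝ → ℂ := fun t => y t * sin (r * t) + y' t * cos (r * t) / r
  have hc₁ : ∫ t in (0 : ℝ)..x, -(q t * y t * sin (r * t)) / r = c₁ x - c₁ 0 := by
    refine integral_zero_eq_sub_of_hasDerivWithinAt (fun t ht => ?_) (by fun_prop) hx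
    refine (((hy.1 t ht).mul (hasDerivAt_cos_ofReal_mul r t).hasDerivWithinAt).sub
      (((hy.2 t ht).mul (hasDerivAt_sin_ofReal_mul r t).hasDerivWithinAt).div_const _)
      ).congr_deriv ?_
    field_simp
    ring
  have hc₂ : ∫ t in (0 : ℝ)..x, q t * y t * cos (r * t) / r = c₂ x - c₂ 0 := by
    refine integral_zero_eq_sub_of_hasDerivWithinAt (fun t ht => ?_) (by fun_prop) hx
    refine (((hy.1 t ht).mul (hasDerivAt_sin_ofReal_mul r t).hasDerivWithinAt).add
      (((hy.2 t ht).mul (hasDerivAt_cos_ofReal_mul r t).hasDerivWithinAt).div_const _)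
      ).congr_deriv ?_
    field_simp
    ring
  rw [intervalIntegral.integral_div, intervalIntegral.integral_neg] at hc₁
  rw [intervalIntegral.integral_div] at hc₂
  simp only [c₁, c₂, Complex.ofReal_zero, mul_zero, Complex.cos_zero, Complex.sin_zero] at hc₁ hc₂
  field_simp at hc₁ hc₂ ⊢
  linear_combination (-(cos (r * x)) * hc₁ - sin (r * x) * hc₂ +
    -(r * y x) * Complex.cos_sq_add_sin_sq (r * x))

lemma norm_sub_le_of_norm_le (hq : ContinuousOn q (Icc 0 1))
    (hMq : ∀ t ∈ Icc (0 : ℝ) 1, |q t| ≤ Mq) (hr : r ≠ 0)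
    (hy : IsSLSolution q ((r : ℂ) ^ 2) y y') {m : ℝ} (hm : ∀ t ∈ Icc (0 : ℝ) 1, ‖y t‖ ≤ m)
    (hx : x ∈ Icc (0 : ℝ) 1) :
    ‖y x - (y 0 * cos (r * x) + y' 0 / r * sin (r * x))‖ ≤ 2 * Mq * m / |r| := by
  rw [hy.eq_add_integral hq hr hx, add_sub_cancel_left, norm_div, Complex.norm_real,
    Real.norm_eq_abs]
  gcongr
  grw [norm_sub_le, norm_mul_le, norm_mul_le, norm_sin_ofReal_mul_le_one,
    norm_cos_ofReal_mul_le_one,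
    norm_integral_ofReal_mul_mul_le hMq hm (norm_cos_ofReal_mul_le_one r) hx,
    norm_integral_ofReal_mul_mul_le hMq hm (norm_sin_ofReal_mul_le_one r) hx]
  linarith

lemma norm_le (hq : ContinuousOn q (Icc 0 1)) (hMq : ∀ t ∈ Icc (0 : ℝ) 1, |q t| ≤ Mq)
    (hr : 4 * Mq < |r|) (hy : IsSLSolution q ((r : ℂ) ^ 2) y y') (hx : x ∈ Icc (0 : ℝ) 1) :
    ‖y x‖ ≤ 2 * (‖y 0‖ + ‖y' 0‖ / |r|) := by
  have hr0 := abs_pos_of_four_mul_lt hMq hr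
  obtain ⟨x₀, hx₀, hmax⟩ := isCompact_Icc.exists_isMaxOn (nonempty_Icc.2 zero_le_one)
    hy.continuousOn.norm
  have hm : ∀ t ∈ Icc (0 : ℝ) 1, ‖y t‖ ≤ ‖y x₀‖ := fun t ht => hmax ht
  have hfree : ‖y 0 * cos (r * x₀) + y' 0 / r * sin (r * x₀)‖ ≤ ‖y 0‖ + ‖y' 0‖ / |r| := by
    grw [norm_add_le, norm_mul_le, norm_mul_le, norm_cos_ofReal_mul_le_one,
      norm_sin_ofReal_mul_le_one, norm_div, Complex.norm_real, Real.norm_eq_abs, mul_one, mul_one]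
  have hpert := hy.norm_sub_le_of_norm_le hq hMq (abs_pos.1 hr0) hm hx₀
  have hhalf : 2 * Mq * ‖y x₀‖ / |r| ≤ ‖y x₀‖ / 2 := by
    rw [div_le_div_iff₀ hr0 two_pos]; nlinarith [norm_nonneg (y x₀)]
  linarith [hm x hx, norm_sub_norm_le (y x₀) (y 0 * cos (r * x₀) + y' 0 / r * sin (r * x₀))]

lemma norm_le_two_div (hq : ContinuousOn q (Icc 0 1))
    (hMq : ∀ t ∈ Icc (0 : ℝ) 1, |q t| ≤ Mq) (hr : 4 * Mq < |r|)
    (hy : IsSLSolution q ((r : ℂ) ^ 2) y y') (hy0 : y 0 = 0) (hy'0 : y' 0 = 1)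
    (hx : x ∈ Icc (0 : ℝ) 1) : ‖y x‖ ≤ 2 / |r| := by
  simpa [hy0, hy'0, div_eq_mul_inv] using hy.norm_le hq hMq hr hx

lemma norm_sub_sin_le (hq : ContinuousOn q (Icc 0 1))
    (hMq : ∀ t ∈ Icc (0 : ℝ) 1, |q t| ≤ Mq) (hr : 4 * Mq < |r|)
    (hy : IsSLSolution q ((r : ℂ) ^ 2) y y') (hy0 : y 0 = 0) (hy'0 : y' 0 = 1)
    (hx : x ∈ Icc (0 : ℝ) 1) : ‖y x - sin (r * x) / r‖ ≤ 4 * Mq / r ^ 2 := by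
  have hr0 := abs_pos_of_four_mul_lt hMq hr
  have := hy.norm_sub_le_of_norm_le hq hMq (abs_pos.1 hr0)
    (fun t ht => hy.norm_le_two_div hq hMq hr hy0 hy'0 ht) hx
  rw [hy0, hy'0] at this
  calc ‖y x - sin (r * x) / r‖ = ‖y x - (0 * cos (r * x) + 1 / r * sin (r * x))‖ := by
        congr 2; ring
    _ ≤ 2 * Mq * (2 / |r|) / |r| := this
    _ = 4 * Mq / r ^ 2 := by rw [← sq_abs]; ring

lemma norm_le_two (hq : ContinuousOn q (Icc 0 1))
    (hMq : ∀ t ∈ Icc (0 : ℝ) 1, |q t| ≤ Mq) (hr : 4 * Mq < |r|)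
    (hy : IsSLSolution q ((r : ℂ) ^ 2) y y') (hy0 : y 0 = 1) (hy'0 : y' 0 = 0)
    (hx : x ∈ Icc (0 : ℝ) 1) : ‖y x‖ ≤ 2 := by
  simpa [hy0, hy'0] using hy.norm_le hq hMq hr hx

lemma norm_sub_cos_le (hq : ContinuousOn q (Icc 0 1))
    (hMq : ∀ t ∈ Icc (0 : ℝ) 1, |q t| ≤ Mq) (hr : 4 * Mq < |r|)
    (hy : IsSLSolution q ((r : ℂ) ^ 2) y y') (hy0 : y 0 = 1) (hy'0 : y' 0 = 0)
    (hx : x ∈ Icc (0 : ℝ) 1) : ‖y x - cos (r * x)‖ ≤ 4 * Mq / |r| := by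
  have hr0 := abs_pos_of_four_mul_lt hMq hr
  have := hy.norm_sub_le_of_norm_le hq hMq (abs_pos.1 hr0)
    (fun t ht => hy.norm_le_two hq hMq hr hy0 hy'0 ht) hx
  rw [hy0, hy'0] at this
  calc ‖y x - cos (r * x)‖ = ‖y x - (1 * cos (r * x) + 0 / r * sin (r * x))‖ := by
        congr 2; ring
    _ ≤ 2 * Mq * 2 / |r| := this
    _ = 4 * Mq / |r| := by ring

lemma norm_sub_cos_sub_sin_le (hq : ContDiffOn ℝ 1 q (Icc 0 1))
    (hMq : ∀ t ∈ Icc (0 : ℝ) 1, |q t| ≤ Mq)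
    (hMq' : ∀ t ∈ Icc (0 : ℝ) 1, |derivWithin q (Icc 0 1) t| ≤ Mq') (hr : 4 * Mq < |r|)
    (hy : IsSLSolution q ((r : ℂ) ^ 2) y y') (hy0 : y 0 = 1) (hy'0 : y' 0 = 0)
    (hx : x ∈ Icc (0 : ℝ) 1) :
    ‖y x - cos (r * x) - (((1 / 2) * ∫ t in (0 : ℝ)..x, q t : ℝ) : ℂ) / r * sin (r * x)‖ ≤
      (Mq + Mq' / 2 + 8 * Mq ^ 2) / r ^ 2 := by
  have hr0 := abs_pos_of_four_mul_lt hMq hr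
  have hqc := hq.continuousOn
  set Q : ℂ := (((1 / 2) * ∫ t in (0 : ℝ)..x, q t : ℝ) : ℂ)
  set J₁ := ∫ t in (0 : ℝ)..x, q t * y t * cos (r * t)
  set J₂ := ∫ t in (0 : ℝ)..x, q t * y t * sin (r * t)
  have hrem {g : ℝ → ℂ} (hg : ∀ t, ‖g t‖ ≤ 1) :
      ‖∫ t in (0 : ℝ)..x, q t * (y t - cos (r * t)) * g t‖ ≤ 4 * Mq ^ 2 / |r| := by
    refine (norm_integral_ofReal_mul_mul_le hMq
      (fun t ht => hy.norm_sub_cos_le hqc hMq hr hy0 hy'0 ht) hg hx).trans (le_of_eq ?_)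
    ring
  have hJ₁ : ‖J₁ - Q‖ ≤ (2 * Mq + Mq') / (4 * |r|) + 4 * Mq ^ 2 / |r| := by
    rw [integral_mul_cos_sub_half_integral hqc hy.continuousOn hx]
    grw [norm_add_le, norm_mul, norm_integral_ofReal_mul_cos_le hq hMq hMq' (abs_pos.1 hr0) hx,
      hrem (norm_cos_ofReal_mul_le_one r)]
    exact le_of_eq (by norm_num; ring)
  have hJ₂ : ‖J₂‖ ≤ (2 * Mq + Mq') / (4 * |r|) + 4 * Mq ^ 2 / |r| := by
    rw [show J₂ = _ from integral_mul_sin_eq hqc hy.continuousOn hx]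
    grw [norm_add_le, norm_mul, norm_integral_ofReal_mul_sin_le hq hMq hMq' (abs_pos.1 hr0) hx,
      hrem (norm_sin_ofReal_mul_le_one r)]
    exact le_of_eq (by norm_num; ring)
  have hrep := hy.eq_add_integral hqc (abs_pos.1 hr0) hx
  rw [hy0, hy'0] at hrep
  have hkey : y x - cos (r * x) - Q / r * sin (r * x) =
      (sin (r * x) * (J₁ - Q) - cos (r * x) * J₂) / r := by
    rw [hrep]; ring
  rw [hkey, norm_div, Complex.norm_real, Real.norm_eq_abs]
  grw [norm_sub_le, norm_mul_le, norm_mul_le, norm_sin_ofReal_mul_le_one,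
    norm_cos_ofReal_mul_le_one, hJ₁, hJ₂]
  exact le_of_eq (by rw [← sq_abs r]; field_simp; ring)

end IsSLSolution

lemma norm_boundary_combination_sub_le {c s cξ sξ : ℂ} {r x ξ Q h γ K : ℝ} (hK : 0 ≤ K)
    (hc : ‖c‖ ≤ 2) (hs : ‖s‖ ≤ 2 / |r|) (hcx : ‖c - cos (r * x)‖ ≤ K / |r|)
    (hcξ : ‖cξ - cos (r * ξ)‖ ≤ K / |r|) (hsx : ‖s - sin (r * x) / r‖ ≤ K / r ^ 2)
    (hsξ : ‖sξ - sin (r * ξ) / r‖ ≤ K / r ^ 2)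
    (hc₂ : ‖c - cos (r * x) - (Q : ℂ) / r * sin (r * x)‖ ≤ K / r ^ 2) :
    ‖(1 - γ * sξ) * c - (h - γ * cξ) * s -
        (cos (r * x) + ((Q - h : ℝ) : ℂ) / r * sin (r * x) + γ / r * sin (r * ((x - ξ : ℝ) : ℂ)))‖ ≤
      (1 + |h| + 6 * |γ|) * K / r ^ 2 := by
  have hr2 : |r| ^ 2 = r ^ 2 := sq_abs r
  have hE₂ : ‖(sξ - sin (r * ξ) / r) * c + sin (r * ξ) / r * (c - cos (r * x))‖ ≤
      3 * K / r ^ 2 := by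
    grw [norm_add_le, norm_mul_le, norm_mul_le, hsξ, hc, norm_div, norm_sin_ofReal_mul_le_one, hcx,
      Complex.norm_real, Real.norm_eq_abs]
    exact le_of_eq (by rw [← hr2]; ring)
  have hE₄ : ‖(cξ - cos (r * ξ)) * s + cos (r * ξ) * (s - sin (r * x) / r)‖ ≤
      3 * K / r ^ 2 := by
    grw [norm_add_le, norm_mul_le, norm_mul_le, hcξ, hs, norm_cos_ofReal_mul_le_one, hsx]
    exact le_of_eq (by rw [← hr2]; ring)
  have hsub : sin (r * ((x - ξ : ℝ) : ℂ)) =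
      sin (r * x) * cos (r * ξ) - cos (r * x) * sin (r * ξ) := by
    rw [Complex.ofReal_sub, mul_sub, Complex.sin_sub]
  rw [show (1 - γ * sξ) * c - (h - γ * cξ) * s -
        (cos (r * x) + ((Q - h : ℝ) : ℂ) / r * sin (r * x) + γ / r * sin (r * ((x - ξ : ℝ) : ℂ))) =
      (c - cos (r * x) - Q / r * sin (r * x)) -
        γ * ((sξ - sin (r * ξ) / r) * c + sin (r * ξ) / r * (c - cos (r * x))) -
        h * (s - sin (r * x) / r) +
        γ * ((cξ - cos (r * ξ)) * s + cos (r * ξ) * (s - sin (r * x) / r)) by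
    rw [hsub]; push_cast; ring]
  grw [norm_add_le, norm_sub_le, norm_sub_le]
  simp only [norm_mul, Complex.norm_real, Real.norm_eq_abs]
  grw [hc₂, hE₂, hsx, hE₄]
  exact le_of_eq (by ring)

theorem exists_norm_eigenfunction_sub_le {q : ℝ → ℝ} (hq : ContDiffOn ℝ 1 q (Icc 0 1))
    (h γ0 ξ0 : ℝ) (hξ0 : ξ0 ∈ Icc (0 : ℝ) 1) {C C' S S' : ℂ → ℝ → ℂ}
    (hsolC : ∀ lam : ℂ, IsSLSolution q lam (C lam) (C' lam))
    (hC0 : ∀ lam : ℂ, C lam 0 = 1) (hC'0 : ∀ lam : ℂ, C' lam 0 = 0)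
    (hsolS : ∀ lam : ℂ, IsSLSolution q lam (S lam) (S' lam))
    (hS0 : ∀ lam : ℂ, S lam 0 = 0) (hS'0 : ∀ lam : ℂ, S' lam 0 = 1) :
    ∃ M R : ℝ, 0 < M ∧ ∀ r : ℝ, R ≤ |r| → ∀ x ∈ Icc (0 : ℝ) 1,
      ‖(Uform h γ0 ξ0 (S ((r : ℂ) ^ 2)) (S' ((r : ℂ) ^ 2)) * C ((r : ℂ) ^ 2) x -
          Uform h γ0 ξ0 (C ((r : ℂ) ^ 2)) (C' ((r : ℂ) ^ 2)) * S ((r : ℂ) ^ 2) x) -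
        (cos (r * x) + (((1 / 2) * (∫ t in (0 : ℝ)..x, q t) - h : ℝ) : ℂ) / r * sin (r * x) +
          γ0 / r * sin (r * ((x - ξ0 : ℝ) : ℂ)))‖ ≤ M / r ^ 2 := by
  obtain ⟨Mq, hMq⟩ := isCompact_Icc.exists_bound_of_continuousOn hq.continuousOn
  obtain ⟨Mq', hMq'⟩ := isCompact_Icc.exists_bound_of_continuousOn
    (hq.continuousOn_derivWithin (uniqueDiffOn_Icc zero_lt_one) le_rfl)
  simp only [Real.norm_eq_abs] at hMq hMq'
  have hMq0 : 0 ≤ Mq := (abs_nonneg _).trans (hMq 0 ⟨le_rfl, zero_le_one⟩)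
  have hMq'0 : 0 ≤ Mq' := (abs_nonneg _).trans (hMq' 0 ⟨le_rfl, zero_le_one⟩)
  set K := 4 * Mq + Mq' + 8 * Mq ^ 2 + 1
  have hK₁ : 4 * Mq ≤ K := by simp only [K]; nlinarith
  have hK₂ : Mq + Mq' / 2 + 8 * Mq ^ 2 ≤ K := by simp only [K]; nlinarith
  refine ⟨(1 + |h| + 6 * |γ0|) * K, 4 * Mq + 1, by positivity, fun r hr x hx => ?_⟩
  have hr' : 4 * Mq < |r| := by linarith
  have hqc := hq.continuousOn
  have hUS : Uform h γ0 ξ0 (S ((r : ℂ) ^ 2)) (S' ((r : ℂ) ^ 2)) =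
      1 - γ0 * S ((r : ℂ) ^ 2) ξ0 := by
    simp [Uform, hS0, hS'0]
  have hUC : Uform h γ0 ξ0 (C ((r : ℂ) ^ 2)) (C' ((r : ℂ) ^ 2)) =
      h - γ0 * C ((r : ℂ) ^ 2) ξ0 := by
    simp [Uform, hC0, hC'0]
  rw [hUS, hUC]
  refine norm_boundary_combination_sub_le (K := K) (by positivity)
    ((hsolC _).norm_le_two hqc hMq hr' (hC0 _) (hC'0 _) hx)
    ((hsolS _).norm_le_two_div hqc hMq hr' (hS0 _) (hS'0 _) hx)
    (((hsolC _).norm_sub_cos_le hqc hMq hr' (hC0 _) (hC'0 _) hx).trans ?_)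
    (((hsolC _).norm_sub_cos_le hqc hMq hr' (hC0 _) (hC'0 _) hξ0).trans ?_)
    (((hsolS _).norm_sub_sin_le hqc hMq hr' (hS0 _) (hS'0 _) hx).trans ?_)
    (((hsolS _).norm_sub_sin_le hqc hMq hr' (hS0 _) (hS'0 _) hξ0).trans ?_)
    (((hsolC _).norm_sub_cos_sub_sin_le hq hMq hMq' hr' (hC0 _) (hC'0 _) hx).trans ?_)
  all_goals gcongr

lemma Complex.eq_re_of_sq_im_eq_zero {z : ℂ} (hre : z.re ≠ 0) (h : (z ^ 2).im = 0) :
    z = z.re := by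
  have him : z.im = 0 := by
    simp only [sq, Complex.mul_im] at h
    exact (mul_eq_zero.1 (by linarith : 2 * z.re * z.im = 0)).resolve_left
      (mul_ne_zero two_ne_zero hre)
  exact Complex.ext rfl (by simp [him])

lemma tendsto_re_atTop_of_norm_sub_le {k : ℕ → ℂ} {a : ℕ → ℝ} (ha : Tendsto a atTop atTop)
    (hk : ∃ (c : ℝ) (N : ℕ), ∀ n ≥ N, ‖k n - a n‖ ≤ c / n) :
    Tendsto (fun n => (k n).re) atTop atTop := by
  obtain ⟨c, N, hc⟩ := hk
  refine tendsto_atTop_mono' _ ?_ (tendsto_atTop_add_const_right _ (-|c|) ha)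
  filter_upwards [eventually_ge_atTop (max N 1)] with n hn
  have hn1 : (1 : ℝ) ≤ n := by exact_mod_cast (le_max_right N 1).trans hn
  have : |(k n).re - a n| ≤ |c| := calc
    |(k n).re - a n| = |(k n - a n).re| := by simp
    _ ≤ c / n := (Complex.abs_re_le_norm _).trans (hc n ((le_max_left N 1).trans hn))
    _ ≤ |c| / n := by gcongr; exact le_abs_self c
    _ ≤ |c| := div_le_self (abs_nonneg c) hn1
  linarith [(abs_le.1 this).1]

theorem stmt_7_general
    (q : ℝ → ℝ) (hq : ContDiffOn ℝ 1 q (Set.Icc 0 1))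
    (h γ0 : ℝ)
    (ξ0 : ℚ) (hξ0 : (ξ0:ℝ) ∈ Set.Ioo 0 1)
    (C C' S S' : ℂ → ℝ → ℂ)
    (hsolC : ∀ lam : ℂ, IsSLSolution q lam (C lam) (C' lam))
    (hC0 : ∀ lam : ℂ, C lam 0 = 1) (hC'0 : ∀ lam : ℂ, C' lam 0 = 0)
    (hsolS : ∀ lam : ℂ, IsSLSolution q lam (S lam) (S' lam))
    (hS0 : ∀ lam : ℂ, S lam 0 = 0) (hS'0 : ∀ lam : ℂ, S' lam 0 = 1)
    (lam : ℕ → ℂ)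
    (hreal : ∀ᶠ n in atTop, (lam n).im = 0)
    (k : ℕ → ℂ) (hk2 : ∀ n, k n ^ 2 = lam n)
    (hkasym : ∃ (c : ℝ) (N : ℕ), ∀ n ≥ N, ‖k n - ((n * Real.pi : ℝ) : ℂ)‖ ≤ c / n) :
    ∃ (M : ℝ) (N : ℕ), 0 < M ∧ ∀ n ≥ N, ∀ x ∈ Set.Icc (0:ℝ) 1,
      ‖(Uform h γ0 ξ0 (S (lam n)) (S' (lam n)) * C (lam n) x -
          Uform h γ0 ξ0 (C (lam n)) (C' (lam n)) * S (lam n) x) -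
        (Complex.cos (k n * (x:ℂ)) +
          (((1/2) * (∫ t in (0:ℝ)..x, q t) - h : ℝ) : ℂ) / k n * Complex.sin (k n * (x:ℂ)) +
          (γ0:ℂ) / k n * Complex.sin (k n * ((x - ξ0 : ℝ) : ℂ)))‖ ≤
        M / ‖k n‖ ^ 2 := by
  obtain ⟨M, R, hM, hbound⟩ := exists_norm_eigenfunction_sub_le hq h γ0 ξ0
    (Ioo_subset_Icc_self hξ0) hsolC hC0 hC'0 hsolS hS0 hS'0
  have hre := tendsto_re_atTop_of_norm_sub_le
    (tendsto_natCast_atTop_atTop.atTop_mul_const Real.pi_pos) hkasym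
  have hk : ∀ᶠ n in atTop, R ≤ (k n).re ∧ k n = (k n).re := by
    filter_upwards [hre.eventually_ge_atTop R, hre.eventually_gt_atTop 0, hreal]
      with n hR hpos him
    exact ⟨hR, Complex.eq_re_of_sq_im_eq_zero hpos.ne' (by rw [hk2, him])⟩
  obtain ⟨N, hN⟩ := eventually_atTop.1 hk
  refine ⟨M, N, hM, fun n hn x hx => ?_⟩
  obtain ⟨hR, hkn⟩ := hN n hn
  rw [← hk2 n, hkn, Complex.norm_real, Real.norm_eq_abs, sq_abs]
  exact hbound _ (hR.trans (le_abs_self _)) x hx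

/-- Lemma 2, case `h, H ∈ ℝ`: the eigenfunction
`φ(·,λₙ) = U(S(·,λₙ)) C(·,λₙ) - U(C(·,λₙ)) S(·,λₙ)` satisfies, for large `n` and uniformly
for `x ∈ [0,1]`,
`φ(x,λₙ) = cos kₙx + ((Q(x) - h)/kₙ) sin kₙx + (γ₀/kₙ) sin kₙ(x - ξ₀) + O(1/kₙ²)`. -/
theorem stmt_7
    (q : ℝ → ℝ) (hq : ContDiffOn ℝ 1 q (Set.Icc 0 1))
    (h H γ0 γ1 : ℝ) (hγ0 : γ0 ≠ 0) (hγ1 : γ1 ≠ 0)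
    (ξ0 ξ1 : ℚ) (hξ0 : (ξ0:ℝ) ∈ Set.Ioo 0 1) (hξ1 : (ξ1:ℝ) ∈ Set.Ioo 0 1)
    (C C' S S' : ℂ → ℝ → ℂ)
    (hsolC : ∀ lam : ℂ, IsSLSolution q lam (C lam) (C' lam))
    (hC0 : ∀ lam : ℂ, C lam 0 = 1) (hC'0 : ∀ lam : ℂ, C' lam 0 = 0)
    (hsolS : ∀ lam : ℂ, IsSLSolution q lam (S lam) (S' lam))
    (hS0 : ∀ lam : ℂ, S lam 0 = 0) (hS'0 : ∀ lam : ℂ, S' lam 0 = 1)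
    (Δ : ℂ → ℂ)
    (hΔ : ∀ lam : ℂ, Δ lam =
      Uform h γ0 ξ0 (C lam) (C' lam) * Vform H γ1 ξ1 (S lam) (S' lam) -
      Uform h γ0 ξ0 (S lam) (S' lam) * Vform H γ1 ξ1 (C lam) (C' lam))
    (lam : ℕ → ℂ) (hen : EnumeratesZeros Δ lam)
    (hreal : ∀ᶠ n in atTop, (lam n).im = 0)
    (k : ℕ → ℂ) (hk2 : ∀ n, k n ^ 2 = lam n)
    (hkasym : ∃ (c : ℝ) (N : ℕ), ∀ n ≥ N, ‖k n - ((n * Real.pi : ℝ) : ℂ)‖ ≤ c / n) :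
    ∃ (M : ℝ) (N : ℕ), 0 < M ∧ ∀ n ≥ N, ∀ x ∈ Set.Icc (0:ℝ) 1,
      ‖(Uform h γ0 ξ0 (S (lam n)) (S' (lam n)) * C (lam n) x -
          Uform h γ0 ξ0 (C (lam n)) (C' (lam n)) * S (lam n) x) -
        (Complex.cos (k n * (x:ℂ)) +
          (((1/2) * (∫ t in (0:ℝ)..x, q t) - h : ℝ) : ℂ) / k n * Complex.sin (k n * (x:ℂ)) +
          (γ0:ℂ) / k n * Complex.sin (k n * ((x - ξ0 : ℝ) : ℂ)))‖ ≤
        M / ‖k n‖ ^ 2 :=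
  stmt_7_general q hq h γ0 ξ0 hξ0 C C' S S' hsolC hC0 hC'0 hsolS hS0 hS'0 lam hreal k hk2 hkasym
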